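/- arXiv:2202.03472 — 4 statements merged into one kernel-verified Lean document; each statement's English description precedes it below -/
import Mathlib

section
/- For every ε > 0 there exists N such that for all n ≥ N there exists a nonzero function f : F_2^n → ℝ supported in the Hamming ball B_7(0,n) of radius 7 with ⟨Af, f⟩ ≥ (4.14 − ε) · √n · ⟨f, f⟩; in particular λ_{B_7(0,n)} ≥ (4.14 − ε) √n. -/
open Finset

/-- The adjacency operator of the Hamming cube: `(Af)(x) = Σ_{y : d_H(x,y) = 1} f(y)`. -/
noncomputable def adjOp {n : ℕ} (f : (Fin n → ZMod 2) → ℝ) : (Fin n → ZMod 2) → ℝ :=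
  fun x => ∑ y : Fin n → ZMod 2, if hammingDist x y = 1 then f y else 0

/-- The inner product `⟨f, g⟩ = Σ_x f(x) g(x)`. -/
noncomputable def innerCube {n : ℕ} (f g : (Fin n → ZMod 2) → ℝ) : ℝ :=
  ∑ x : Fin n → ZMod 2, f x * g x

/-- The maximal eigenvalue of the subgraph of the Hamming cube induced by `B`. -/
noncomputable def maxEig {n : ℕ} (B : Finset (Fin n → ZMod 2)) : ℝ :=
  sSup {r : ℝ | ∃ f : (Fin n → ZMod 2) → ℝ, f ≠ 0 ∧ (∀ x, f x ≠ 0 → x ∈ B) ∧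
    r = innerCube (adjOp f) f / innerCube f f}

/-- The Hamming ball of radius `r` centered at `0` in `F_2^n`. -/
def hammingBall (n r : ℕ) : Finset (Fin n → ZMod 2) :=
  Finset.univ.filter (fun x => hammingNorm x ≤ r)


section Aux
variable {n : ℕ}

lemma zmod2_cases : ∀ a : ZMod 2, a = 0 ∨ a = 1 := by decide

def flp (x : Fin n → ZMod 2) (i : Fin n) : Fin n → ZMod 2 :=
  Function.update x i (x i + 1)

lemma zmod2_ne_iff : ∀ {a b : ZMod 2}, a ≠ b ↔ b = a + 1 := by decide

lemma flp_apply (x : Fin n → ZMod 2) (i j : Fin n) :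
    flp x i j = if j = i then x i + 1 else x j := by
  simp [flp, Function.update]

lemma hammingDist_flp (x : Fin n → ZMod 2) (i : Fin n) : hammingDist x (flp x i) = 1 := by
  unfold hammingDist
  rw [Finset.card_eq_one]
  refine ⟨i, ?_⟩
  ext j
  simp only [mem_filter, mem_univ, true_and, mem_singleton, flp_apply]
  rcases eq_or_ne j i with h | h
  · subst h; simp [zmod2_ne_iff]
  · simp [h]

lemma flp_inj (x : Fin n → ZMod 2) : Function.Injective (flp x) := by
  intro i j h
  by_contra hne
  have h1 := congrFun h i
  rw [flp_apply, flp_apply, if_pos rfl, if_neg hne] at h1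
  exact absurd h1 (by simp [zmod2_ne_iff])

lemma exists_flp {x y : Fin n → ZMod 2} (h : hammingDist x y = 1) : ∃ i, y = flp x i := by
  unfold hammingDist at h
  rw [Finset.card_eq_one] at h
  obtain ⟨i, hi⟩ := h
  have hmem : ∀ j : Fin n, x j ≠ y j ↔ j = i := by
    intro j
    rw [← mem_singleton, ← hi, mem_filter]
    simp
  refine ⟨i, funext fun j => ?_⟩
  rw [flp_apply]
  rcases eq_or_ne j i with hj | hj
  · rw [if_pos hj, ← hj]
    exact zmod2_ne_iff.mp ((hmem j).mpr hj)
  · rw [if_neg hj]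
    by_contra hc
    exact hj ((hmem j).mp (fun he => hc he.symm))

/-- sum over neighbors = sum over flips -/
lemma sum_neighbors (x : Fin n → ZMod 2) (g : (Fin n → ZMod 2) → ℝ) :
    (∑ y : Fin n → ZMod 2, if hammingDist x y = 1 then g y else 0) = ∑ i : Fin n, g (flp x i) := by
  rw [← Finset.sum_filter]
  refine (Finset.sum_bij (fun i _ => flp x i) ?_ ?_ ?_ ?_).symm
  · intro i _; simp [hammingDist_flp]
  · intro i _ j _ h; exact flp_inj x h
  · intro y hy
    obtain ⟨i, hi⟩ := exists_flp (by simpa using hy)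
    exact ⟨i, mem_univ i, hi.symm⟩
  · intro i _; rfl


lemma hammingNorm_flp (x : Fin n → ZMod 2) (i : Fin n) :
    hammingNorm (flp x i) = if x i = 0 then hammingNorm x + 1 else hammingNorm x - 1 := by
  unfold hammingNorm
  have key : (univ.filter fun j => flp x i j ≠ 0) =
      if x i = 0 then insert i (univ.filter fun j => x j ≠ 0)
      else (univ.filter fun j => x j ≠ 0).erase i := by
    rcases zmod2_cases (x i) with h | h
    · rw [if_pos h]
      ext j
      simp only [mem_filter, mem_univ, true_and, mem_insert, flp_apply]
      rcases eq_or_ne j i with hj | hj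
      · subst hj; simp [h]
      · simp [hj]
    · rw [if_neg (by simp [h])]
      ext j
      simp only [mem_filter, mem_univ, true_and, mem_erase, flp_apply]
      rcases eq_or_ne j i with hj | hj
      · subst hj; simp [h]
        decide
      · simp [hj]
  rw [key]
  rcases zmod2_cases (x i) with h | h
  · rw [if_pos h, if_pos h, card_insert_of_notMem (by simp [h])]
  · rw [if_neg (by simp [h]), if_neg (by simp [h]),
      card_erase_of_mem (by simp [h])]

lemma zmod2_ne_zero_iff : ∀ a : ZMod 2, a ≠ 0 ↔ a = 1 := by decide

lemma card_level (k : ℕ) :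
    #(univ.filter fun x : Fin n → ZMod 2 => hammingNorm x = k) = n.choose k := by
  have hc := Finset.card_powersetCard k (univ : Finset (Fin n))
  rw [card_univ, Fintype.card_fin] at hc
  rw [← hc]
  refine Finset.card_bij (fun x _ => univ.filter fun i => x i ≠ 0) ?_ ?_ ?_
  · intro x hx
    rw [Finset.mem_powersetCard]
    exact ⟨filter_subset _ _ |>.trans (by simp), (mem_filter.mp hx).2⟩
  · intro x hx y hy hxy
    funext j
    have : (j ∈ univ.filter fun i => x i ≠ 0) ↔ (j ∈ univ.filter fun i => y i ≠ 0) := by rw [hxy]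
    simp only [mem_filter, mem_univ, true_and] at this
    rcases zmod2_cases (x j) with h | h <;> rcases zmod2_cases (y j) with h' | h' <;>
      simp [h, h'] at this ⊢
  · intro s hs
    rw [Finset.mem_powersetCard] at hs
    refine ⟨fun i => if i ∈ s then 1 else 0, ?_, ?_⟩
    · rw [mem_filter]
      refine ⟨mem_univ _, ?_⟩
      rw [← hs.2]
      unfold hammingNorm
      congr 1
      ext i
      by_cases h : i ∈ s <;> simp [h]
    · ext i
      by_cases h : i ∈ s <;> simp [h]

lemma radial_sum (g : ℕ → ℝ) :
    ∑ x : Fin n → ZMod 2, g (hammingNorm x)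
      = ∑ k ∈ range (n + 1), (n.choose k : ℝ) * g k := by
  have h : ∀ x : Fin n → ZMod 2, hammingNorm x ∈ range (n + 1) := fun x =>
    mem_range.mpr (Nat.lt_succ_of_le (le_trans hammingNorm_le_card_fintype (by simp)))
  rw [← Finset.sum_fiberwise_of_maps_to (fun x (_ : x ∈ univ) => h x)
    (fun x => g (hammingNorm x))]
  refine Finset.sum_congr rfl fun k _ => ?_
  rw [Finset.sum_congr rfl (fun x hx => by rw [(mem_filter.mp hx).2]),
    Finset.sum_const, card_level, nsmul_eq_mul]

lemma sum_flp_weights (x : Fin n → ZMod 2) (a : ℕ → ℝ) :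
    ∑ i : Fin n, a (hammingNorm (flp x i))
      = ((n - hammingNorm x : ℕ) : ℝ) * a (hammingNorm x + 1)
        + (hammingNorm x : ℝ) * a (hammingNorm x - 1) := by
  have hsplit := Finset.sum_filter_add_sum_filter_not (univ : Finset (Fin n))
    (fun i => x i = 0) (fun i => a (hammingNorm (flp x i)))
  rw [← hsplit]
  have h1 : ∑ i ∈ univ.filter (fun i => x i = 0), a (hammingNorm (flp x i))
      = ((n - hammingNorm x : ℕ) : ℝ) * a (hammingNorm x + 1) := by
    rw [Finset.sum_congr rfl (fun i hi => by
      rw [hammingNorm_flp, if_pos (mem_filter.mp hi).2]), Finset.sum_const, nsmul_eq_mul]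
    congr 2
    have := Finset.card_filter_add_card_filter_not (s := (univ : Finset (Fin n)))
      (p := fun i => x i = 0)
    rw [card_univ, Fintype.card_fin] at this
    have hn : #(univ.filter fun i => ¬ x i = 0) = hammingNorm x := rfl
    omega
  have h2 : ∑ i ∈ univ.filter (fun i => ¬ x i = 0), a (hammingNorm (flp x i))
      = (hammingNorm x : ℝ) * a (hammingNorm x - 1) := by
    rw [Finset.sum_congr rfl (fun i hi => by
      rw [hammingNorm_flp, if_neg (mem_filter.mp hi).2]), Finset.sum_const, nsmul_eq_mul]
    rfl
  rw [h1, h2]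

/-- approximate top-eigenvector coefficients -/
noncomputable def cc (k : ℕ) : ℝ :=
  ([1, 4.1445, 16.1773, 58.7584, 194.995, 573.1326, 1400.4, 2365.2282] : List ℝ).getD k 0

lemma cc_nonneg (k : ℕ) : 0 ≤ cc k := by
  unfold cc
  match k with
  | 0 | 1 | 2 | 3 | 4 | 5 | 6 | 7 => norm_num [List.getD]
  | (m+8) => simp [List.getD]

lemma cc_zero {k : ℕ} (hk : 8 ≤ k) : cc k = 0 := by
  unfold cc
  rw [List.getD_eq_default]
  simpa using hk

lemma cc_zero' : cc 0 = 1 := by norm_num [cc, List.getD]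

set_option maxHeartbeats 1000000 in
theorem main_construction (n : ℕ) (hn : 50000 ≤ n) :
    ∃ f : (Fin n → ZMod 2) → ℝ, f ≠ 0 ∧ (∀ x, f x ≠ 0 → hammingNorm x ≤ 7) ∧
      innerCube (adjOp f) f ≥ 4.14 * Real.sqrt n * innerCube f f ∧ 0 < innerCube f f := by
  have hn0 : 0 < n := by omega
  have hnR : (50000 : ℝ) ≤ (n : ℝ) := by exact_mod_cast hn
  set s : ℝ := Real.sqrt n with hs_def
  have hs : 0 < s := Real.sqrt_pos.mpr (by exact_mod_cast hn0)
  have hss : s * s = (n : ℝ) := Real.mul_self_sqrt (by positivity)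
  set a : ℕ → ℝ := fun k => cc k / s ^ k with ha_def
  have ha_nonneg : ∀ k, 0 ≤ a k := fun k => div_nonneg (cc_nonneg k) (by positivity)
  have ha_zero : ∀ k, 8 ≤ k → a k = 0 := fun k hk => by simp [ha_def, cc_zero hk]
  have ha0 : a 0 = 1 := by simp [ha_def, cc_zero']
  refine ⟨fun x => a (hammingNorm x), ?_, ?_, ?_, ?_⟩
  · intro h
    have := congrFun h 0
    simp only [Pi.zero_apply] at this
    rw [hammingNorm_zero, ha0] at this
    norm_num at this
  · intro x hx
    by_contra hc
    exact hx (ha_zero _ (by omega))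
  · -- main inequality
    set F : (Fin n → ZMod 2) → ℝ := fun x => a (hammingNorm x) with hF_def
    set T : ℝ := ∑ j ∈ range 7, cc j * cc (j+1) / (Nat.factorial j : ℝ) with hT_def
    set D : ℝ := ∑ k ∈ range 8, cc k ^ 2 / (Nat.factorial k : ℝ) with hD_def
    -- upper bound for innerCube F F
    have hff : innerCube F F = ∑ k ∈ range (n+1), (n.choose k : ℝ) * (a k * a k) :=
      radial_sum (fun k => a k * a k)
    have hffD : innerCube F F ≤ D := by
      rw [hff, ← Finset.sum_subset (Finset.range_subset_range.mpr (by omega) : range 8 ⊆ range (n+1))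
        (fun k _ hk => by rw [ha_zero k (by simpa using hk)]; ring)]
      refine Finset.sum_le_sum fun k _ => ?_
      have hkf : (0:ℝ) < (Nat.factorial k : ℝ) := by exact_mod_cast Nat.factorial_pos k
      have hnp : (0:ℝ) < (n:ℝ) ^ k := by positivity
      have haa : a k * a k = cc k ^ 2 / (n:ℝ) ^ k := by
        rw [ha_def]
        rw [div_mul_div_comm, ← mul_pow, hss, sq]
      rw [haa, ← mul_div_assoc, div_le_div_iff₀ hnp hkf]
      have hC : (n.choose k : ℝ) * (Nat.factorial k : ℝ) ≤ (n:ℝ) ^ k := by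
        have h1 : n.choose k * Nat.factorial k ≤ n ^ k := by
          rw [Nat.mul_comm, ← Nat.descFactorial_eq_factorial_mul_choose]
          exact Nat.descFactorial_le_pow n k
        exact_mod_cast h1
      nlinarith [sq_nonneg (cc k), mul_le_mul_of_nonneg_right hC (sq_nonneg (cc k))]
    have hffpos : 0 ≤ innerCube F F := by
      unfold innerCube; exact Finset.sum_nonneg fun x _ => mul_self_nonneg _
    -- lower bound for innerCube (adjOp F) F
    set G : ℕ → ℝ := fun k =>
      (((n - k : ℕ) : ℝ) * a (k+1) + (k : ℝ) * a (k-1)) * a k with hG_def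
    have hAf : innerCube (adjOp F) F = ∑ k ∈ range (n+1), (n.choose k : ℝ) * G k := by
      have : innerCube (adjOp F) F = ∑ x : Fin n → ZMod 2, G (hammingNorm x) := by
        unfold innerCube adjOp
        refine Finset.sum_congr rfl fun x _ => ?_
        rw [hF_def]
        simp only []
        rw [sum_neighbors x (fun y => a (hammingNorm y)), sum_flp_weights x a, hG_def]
      rw [this, radial_sum G]
    set P : ℕ → ℝ := fun k => (n.choose k : ℝ) * ((n - k : ℕ) : ℝ) * (a k * a (k+1)) with hP_def
    have hG_nonneg : ∀ k, 0 ≤ (n.choose k : ℝ) * G k := by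
      intro k
      have := ha_nonneg k; have := ha_nonneg (k+1); have := ha_nonneg (k-1)
      rw [hG_def]
      have h1 : (0:ℝ) ≤ ((n - k : ℕ) : ℝ) := Nat.cast_nonneg _
      positivity
    have step1 : ∑ k ∈ range 8, (n.choose k : ℝ) * G k ≤ innerCube (adjOp F) F := by
      rw [hAf]
      exact Finset.sum_le_sum_of_subset_of_nonneg (Finset.range_subset_range.mpr (by omega))
        (fun k _ _ => hG_nonneg k)
    have step2 : ∑ k ∈ range 8, (n.choose k : ℝ) * G k = 2 * ∑ j ∈ range 7, P j := by
      have hsplit : ∀ k, (n.choose k : ℝ) * G k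
          = P k + (n.choose k : ℝ) * (k : ℝ) * (a (k-1) * a k) := by
        intro k; rw [hG_def, hP_def]; ring
      rw [Finset.sum_congr rfl fun k _ => hsplit k, Finset.sum_add_distrib]
      have e1 : ∑ k ∈ range 8, P k = ∑ j ∈ range 7, P j := by
        rw [Finset.sum_range_succ]
        have h70 : P 7 = 0 := by rw [hP_def]; simp [ha_zero 8 le_rfl]
        rw [h70, add_zero]
      have e2 : ∑ k ∈ range 8, (n.choose k : ℝ) * (k : ℝ) * (a (k-1) * a k)
          = ∑ j ∈ range 7, P j := by
        rw [Finset.sum_range_succ']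
        have : ∀ j, j ∈ range 7 → (n.choose (j+1) : ℝ) * ((j+1 : ℕ) : ℝ) * (a ((j+1)-1) * a (j+1))
            = P j := by
          intro j _
          have hkey : (n.choose (j+1) : ℝ) * ((j+1 : ℕ) : ℝ)
              = (n.choose j : ℝ) * ((n - j : ℕ) : ℝ) := by
            exact_mod_cast Nat.choose_succ_right_eq n j
          rw [hP_def]
          simp only [Nat.add_sub_cancel]
          rw [← hkey]
        rw [Finset.sum_congr rfl this]
        simp
      rw [e1, e2]; ring
    -- per-term lower bound
    have step3 : ∀ j, j ∈ range 7 →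
        cc j * cc (j+1) / (Nat.factorial j : ℝ) * (((n:ℝ) - 42) / s) ≤ P j := by
      intro j hj
      have hj7 : j < 7 := by simpa using hj
      set m : ℕ := n - 6 with hm_def
      have hmcast : (m:ℝ) = (n:ℝ) - 6 := by
        rw [hm_def]; push_cast [Nat.cast_sub (by omega : 6 ≤ n)]; ring
      have hjf : (0:ℝ) < (Nat.factorial j : ℝ) := by exact_mod_cast Nat.factorial_pos j
      have hnp : (0:ℝ) < (n:ℝ) ^ j := by positivity
      have hnpos : (0:ℝ) < (n:ℝ) := by linarith
      -- choose lower bound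
      have hC : ((m:ℝ)) ^ j ≤ (Nat.factorial j : ℝ) * (n.choose j : ℝ) := by
        have h1 : m ^ j ≤ Nat.factorial j * n.choose j := by
          calc m ^ j ≤ (n + 1 - j) ^ j :=
                Nat.pow_le_pow_left (by omega) j
            _ ≤ n.descFactorial j := Nat.pow_sub_le_descFactorial n j
            _ = Nat.factorial j * n.choose j := Nat.descFactorial_eq_factorial_mul_choose n j
        exact_mod_cast h1
      have hnk : (m:ℝ) ≤ ((n - j : ℕ) : ℝ) := by
        have : m ≤ n - j := by omega
        exact_mod_cast this
      -- Bernoulli bound : (n-42) * n^j ≤ m^(j+1)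
      have hbern : ((n:ℝ) - 42) * (n:ℝ) ^ j ≤ (m:ℝ) ^ j * (m:ℝ) := by
        set r : ℝ := (m:ℝ) / (n:ℝ) with hr_def
        have hr0 : 0 ≤ r := by positivity
        have hr1 : r ≤ 1 := by
          rw [hr_def, div_le_one hnpos, hmcast]; linarith
        have h7 : r ^ 7 ≤ r ^ (j+1) := pow_le_pow_of_le_one hr0 hr1 (by omega)
        have hb : 1 - 42 / (n:ℝ) ≤ r ^ 7 := by
          have := one_add_mul_le_pow (a := -6/(n:ℝ)) (by
            rw [neg_div]
            have : 6 / (n:ℝ) ≤ 1 := by rw [div_le_one hnpos]; linarith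
            linarith) 7
          have heq : 1 + (-6/(n:ℝ)) = r := by
            rw [hr_def, hmcast]; field_simp; ring
          rw [heq] at this
          calc 1 - 42 / (n:ℝ) = 1 + (7:ℕ) * (-6/(n:ℝ)) := by push_cast; ring
            _ ≤ r ^ 7 := this
        have hrn : (m:ℝ) = r * (n:ℝ) := by rw [hr_def]; field_simp
        calc ((n:ℝ) - 42) * (n:ℝ) ^ j = ((1 - 42/(n:ℝ)) * (n:ℝ)) * (n:ℝ)^j := by
              field_simp
          _ ≤ (r ^ (j+1) * (n:ℝ)) * (n:ℝ)^j := by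
              have : 1 - 42/(n:ℝ) ≤ r ^ (j+1) := le_trans hb h7
              have hx : (0:ℝ) ≤ (n:ℝ) * (n:ℝ)^j := by positivity
              nlinarith
          _ = (r * (n:ℝ)) ^ j * (r * (n:ℝ)) := by ring
          _ = (m:ℝ) ^ j * (m:ℝ) := by rw [← hrn]
      -- a j * a (j+1) value
      have haa : a j * a (j+1) = cc j * cc (j+1) / ((n:ℝ) ^ j * s) := by
        rw [ha_def]
        simp only []
        rw [div_mul_div_comm]
        congr 1
        rw [pow_succ, ← mul_assoc, ← mul_pow, hss]
      have hccnn : (0:ℝ) ≤ cc j * cc (j+1) := mul_nonneg (cc_nonneg j) (cc_nonneg (j+1))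
      rw [hP_def]
      simp only []
      rw [haa, div_mul_div_comm, ← mul_div_assoc, div_le_div_iff₀ (by positivity) (by positivity)]
      -- goal : cc j * cc (j+1) * (n - 42) * (n^j * s) ≤ choose * (n-j) * (cc j cc (j+1)) * (j! * s)
      have key : ((n:ℝ) - 42) * (n:ℝ)^j ≤ (Nat.factorial j : ℝ) * (n.choose j : ℝ) * ((n - j : ℕ) : ℝ) := by
        have hm0 : (0:ℝ) ≤ (m:ℝ) := Nat.cast_nonneg m
        have h2 : (m:ℝ)^j * (m:ℝ) ≤ ((Nat.factorial j : ℝ) * (n.choose j : ℝ)) * ((n - j:ℕ):ℝ) :=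
          mul_le_mul hC hnk hm0 (by positivity)
        linarith
      have hs0 : (0:ℝ) ≤ s := le_of_lt hs
      calc cc j * cc (j+1) * ((n:ℝ) - 42) * ((n:ℝ)^j * s)
          = (((n:ℝ) - 42) * (n:ℝ)^j) * (cc j * cc (j+1) * s) := by ring
        _ ≤ ((Nat.factorial j : ℝ) * (n.choose j : ℝ) * ((n - j:ℕ):ℝ)) * (cc j * cc (j+1) * s) := by
            have := mul_nonneg hccnn hs0
            nlinarith [key]
        _ = (n.choose j : ℝ) * ((n - j:ℕ):ℝ) * (cc j * cc (j+1)) * ((Nat.factorial j:ℝ) * s) := by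
            ring
    have step4 : T * (((n:ℝ) - 42) / s) ≤ ∑ j ∈ range 7, P j := by
      rw [hT_def, Finset.sum_mul]
      exact Finset.sum_le_sum step3
    -- final numeric assembly
    have hTD : 2 * T * ((n:ℝ) - 42) ≥ 4.14 * (n:ℝ) * D := by
      have hT : T = 11040885450031 / 600000000 := by
        rw [hT_def]
        norm_num [Finset.sum_range_succ, cc, List.getD, Nat.factorial]
      have hD : D = 372953640913853 / 42000000000 := by
        rw [hD_def]
        norm_num [Finset.sum_range_succ, cc, List.getD, Nat.factorial]
      rw [hT, hD]
      nlinarith [hnR]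
    have hchain : innerCube (adjOp F) F ≥ 2 * T * (((n:ℝ) - 42) / s) := by
      calc innerCube (adjOp F) F ≥ ∑ k ∈ range 8, (n.choose k : ℝ) * G k := step1
        _ = 2 * ∑ j ∈ range 7, P j := step2
        _ ≥ 2 * (T * (((n:ℝ) - 42) / s)) := by linarith [step4]
        _ = 2 * T * (((n:ℝ) - 42) / s) := by ring
    have hfinal : 4.14 * s * innerCube F F ≤ 2 * T * (((n:ℝ) - 42) / s) := by
      have h1 : 4.14 * s * innerCube F F ≤ 4.14 * s * D := by
        have : (0:ℝ) ≤ 4.14 * s := by positivity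
        nlinarith [hffD]
      have h2 : 4.14 * s * D ≤ 2 * T * (((n:ℝ) - 42) / s) := by
        rw [ge_iff_le] at hTD
        rw [← mul_div_assoc, le_div_iff₀ hs]
        calc 4.14 * s * D * s = 4.14 * (s * s) * D := by ring
          _ = 4.14 * (n:ℝ) * D := by rw [hss]
          _ ≤ 2 * T * ((n:ℝ) - 42) := hTD
      linarith
    linarith [hchain, hfinal]
  · -- positivity of innerCube f f
    unfold innerCube
    refine Finset.sum_pos' (fun x _ => mul_self_nonneg _) ⟨0, mem_univ _, ?_⟩
    simp only []
    rw [hammingNorm_zero, ha0]; norm_num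

lemma flp_invol (i : Fin n) (x : Fin n → ZMod 2) : flp (flp x i) i = x := by
  funext j
  rw [flp_apply]
  rcases eq_or_ne j i with h | h
  · rw [if_pos h, flp_apply, if_pos rfl, h]
    have h2 : (1 + 1 : ZMod 2) = 0 := rfl
    rw [add_assoc, h2, add_zero]
  · rw [if_neg h, flp_apply, if_neg h]

lemma inner_self_pos {f : (Fin n → ZMod 2) → ℝ} (hf : f ≠ 0) : 0 < innerCube f f := by
  obtain ⟨x0, hx0⟩ : ∃ x, f x ≠ 0 := by
    by_contra h
    push_neg at h
    exact hf (funext fun x => h x)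
  exact Finset.sum_pos' (fun x _ => mul_self_nonneg _)
    ⟨x0, mem_univ _, mul_self_pos.mpr hx0⟩

lemma rayleigh_bdd (B : Finset (Fin n → ZMod 2)) :
    BddAbove {r : ℝ | ∃ f : (Fin n → ZMod 2) → ℝ, f ≠ 0 ∧ (∀ x, f x ≠ 0 → x ∈ B) ∧
      r = innerCube (adjOp f) f / innerCube f f} := by
  refine ⟨n, fun r hr => ?_⟩
  obtain ⟨f, hf0, -, rfl⟩ := hr
  have hpos := inner_self_pos hf0
  rw [div_le_iff₀ hpos]
  have key : innerCube (adjOp f) f ≤ (n : ℝ) * innerCube f f := by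
    unfold innerCube adjOp
    calc ∑ x : Fin n → ZMod 2, (∑ y : Fin n → ZMod 2,
            if hammingDist x y = 1 then f y else 0) * f x
        = ∑ x : Fin n → ZMod 2, ∑ i : Fin n, f (flp x i) * f x := by
          refine Finset.sum_congr rfl fun x _ => ?_
          rw [sum_neighbors x f, Finset.sum_mul]
      _ ≤ ∑ x : Fin n → ZMod 2, ∑ i : Fin n, (f (flp x i) ^ 2 + f x ^ 2) / 2 := by
          refine Finset.sum_le_sum fun x _ => Finset.sum_le_sum fun i _ => ?_
          nlinarith [sq_nonneg (f (flp x i) - f x)]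
      _ = (∑ x : Fin n → ZMod 2, ∑ i : Fin n, f (flp x i) ^ 2 / 2)
            + ∑ x : Fin n → ZMod 2, ∑ i : Fin n, f x ^ 2 / 2 := by
          rw [← Finset.sum_add_distrib]
          refine Finset.sum_congr rfl fun x _ => ?_
          rw [← Finset.sum_add_distrib]
          exact Finset.sum_congr rfl fun i _ => by ring
      _ = (n : ℝ) * ∑ x : Fin n → ZMod 2, f x * f x := by
          have h1 : ∀ i : Fin n, ∑ x : Fin n → ZMod 2, f (flp x i) ^ 2 / 2
              = ∑ x : Fin n → ZMod 2, f x ^ 2 / 2 := by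
            intro i
            exact Finset.sum_bijective (fun x => flp x i)
              (Function.Involutive.bijective (flp_invol i)) (by simp) (fun x _ => rfl)
          have h2 : ∑ x : Fin n → ZMod 2, ∑ _i : Fin n, f x ^ 2 / 2
              = (n:ℝ) * ∑ x : Fin n → ZMod 2, f x ^ 2 / 2 := by
            rw [Finset.sum_congr rfl (fun x (_ : x ∈ univ) => Finset.sum_const (f x ^ 2 / 2)),
              Finset.mul_sum]
            refine Finset.sum_congr rfl fun x _ => ?_
            rw [card_univ, Fintype.card_fin, nsmul_eq_mul]
          rw [Finset.sum_comm, Finset.sum_congr rfl (fun i (_ : i ∈ univ) => h1 i),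
            Finset.sum_const, h2, card_univ, Fintype.card_fin, nsmul_eq_mul]
          have h3 : ∑ x : Fin n → ZMod 2, f x * f x
              = ∑ x : Fin n → ZMod 2, (f x ^ 2 / 2 + f x ^ 2 / 2) :=
            Finset.sum_congr rfl fun x _ => by ring
          rw [h3, Finset.sum_add_distrib]
          ring
  linarith [key]

end Aux

theorem eig_ball_seven :
    ∀ ε : ℝ, 0 < ε → ∃ N : ℕ, ∀ n : ℕ, N ≤ n →
      (∃ f : (Fin n → ZMod 2) → ℝ, f ≠ 0 ∧ (∀ x, f x ≠ 0 → hammingNorm x ≤ 7) ∧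
        innerCube (adjOp f) f ≥ ((4.14 : ℝ) - ε) * Real.sqrt n * innerCube f f) ∧
      maxEig (hammingBall n 7) ≥ ((4.14 : ℝ) - ε) * Real.sqrt n := by
  intro ε hε
  refine ⟨50000, fun n hn => ?_⟩
  obtain ⟨f, hf0, hsupp, hineq, hpos⟩ := main_construction n hn
  have hs0 : (0:ℝ) ≤ Real.sqrt n := Real.sqrt_nonneg _
  have hle : ((4.14:ℝ) - ε) * Real.sqrt n ≤ 4.14 * Real.sqrt n :=
    mul_le_mul_of_nonneg_right (by linarith) hs0
  have hmain : innerCube (adjOp f) f ≥ ((4.14:ℝ) - ε) * Real.sqrt n * innerCube f f := by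
    calc ((4.14:ℝ) - ε) * Real.sqrt n * innerCube f f
        ≤ 4.14 * Real.sqrt n * innerCube f f := mul_le_mul_of_nonneg_right hle hpos.le
      _ ≤ innerCube (adjOp f) f := hineq
  refine ⟨⟨f, hf0, hsupp, hmain⟩, ?_⟩
  have hmem : innerCube (adjOp f) f / innerCube f f ∈
      {r : ℝ | ∃ g : (Fin n → ZMod 2) → ℝ, g ≠ 0 ∧ (∀ x, g x ≠ 0 → x ∈ hammingBall n 7) ∧
        r = innerCube (adjOp g) g / innerCube g g} :=
    ⟨f, hf0, fun x hx => Finset.mem_filter.mpr ⟨mem_univ x, hsupp x hx⟩, rfl⟩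
  have hr : ((4.14:ℝ) - ε) * Real.sqrt n ≤ innerCube (adjOp f) f / innerCube f f :=
    (le_div_iff₀ hpos).mpr hmain
  exact hr.trans (le_csSup (rayleigh_bdd _) hmem)
end

section
/- Fix any real constant t with 0 < t < √3/2 ≈ 0.866. Then there exist a constant K > 0 and an integer N such that for all n ≥ N, every binary (n, M, d) code with minimum distance d ≥ n/2 − t√n satisfies M ≤ K · n^{5/2}; in particular A(n, d) = O(n^{2.5}) whenever d ≥ n/2 − t√n. -/
/-!
Delsarte's linear programming bound. Map codewords to `±1`-vectors, so that two words at distance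
`j` have correlation `s = n - 2j`. For the `k`-th Krawtchouk polynomial `K_k`,
`∑_{x, y ∈ C} K_k(s(x, y)) = ∑_{|S| = k} (∑_{x ∈ C} χ_S(x))² ≥ 0`. Hence if `f = ∑ a_k K_k` has
`a_k ≥ 0` for `k ≥ 1` and `f ≤ 0` at every correlation of two distinct codewords, then
`a_0 |C|² ≤ ∑_{x,y} f(s(x,y)) ≤ |C| f(n)`.

With `v = √n`, `δ = 3 - 4τ²` and `d ≥ n/2 - τv`, the quintic
`f(s) = (s - 2τv)((2 - δ)s² + 4τvs + δv²)²` is nonpositive at every correlation `s ≤ 2τv`. Its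
Krawtchouk coefficients are nonnegative, and `a_0 ≥ δv⁵/2` while `f(n) ≤ 16v¹⁰`, so
`|C| ≤ 32 n^{5/2} / δ`.
-/

open Finset

/-- The binary Krawtchouk polynomial `K_k` of length `m`, in the variable `s = m - 2j` rather than
the distance `j`: by `Multiset.esymm_eq_krawtchouk` it is the `k`-th elementary symmetric function
of any `±1`-vector of length `m` and sum `s`. -/
noncomputable def krawtchouk (m s : ℝ) : ℕ → ℝ
  | 0 => 1
  | 1 => s
  | k + 2 => (s * krawtchouk m s (k + 1) - (m - k) * krawtchouk m s k) / (k + 2)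

lemma krawtchouk_zero_zero_succ (k : ℕ) : krawtchouk 0 0 (k + 1) = 0 := by
  induction k using Nat.twoStepInduction with
  | zero => simp [krawtchouk]
  | one => simp [krawtchouk]
  | more k ih _ => simp [krawtchouk, ih]

lemma krawtchouk_recurrence (m s : ℝ) (k : ℕ) :
    (k + 2 : ℝ) * krawtchouk m s (k + 2)
      = s * krawtchouk m s (k + 1) - (m - k) * krawtchouk m s k := by
  rw [krawtchouk]
  field_simp

lemma krawtchouk_succ_add {w : ℝ} (hw : w ^ 2 = 1) (m s : ℝ) (k : ℕ) :
    krawtchouk (m + 1) (s + w) (k + 1) = krawtchouk m s (k + 1) + w * krawtchouk m s k := by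
  induction k using Nat.twoStepInduction with
  | zero => simp [krawtchouk]
  | one => simp only [krawtchouk]; linear_combination hw / 2
  | more k ih₀ ih₁ =>
    have hk : (k + 3 : ℝ) ≠ 0 := by positivity
    have e₁ := krawtchouk_recurrence (m + 1) (s + w) (k + 1)
    have e₂ := krawtchouk_recurrence m s (k + 1)
    have e₃ := krawtchouk_recurrence m s k
    push_cast at e₁ e₂
    refine mul_left_cancel₀ hk ?_
    linear_combination e₁ - e₂ + (s + w) * ih₁ - (m - k) * ih₀ - w * e₃
      + krawtchouk m s (k + 1) * hw

theorem Multiset.esymm_cons_succ {R : Type*} [CommSemiring R] (a : R) (s : Multiset R) (k : ℕ) :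
    (a ::ₘ s).esymm (k + 1) = s.esymm (k + 1) + a * s.esymm k := by
  simp [Multiset.esymm, Multiset.powersetCard_cons, Multiset.sum_map_mul_left]

theorem Multiset.esymm_eq_krawtchouk {s : Multiset ℝ} (hs : ∀ x ∈ s, x ^ 2 = 1) (k : ℕ) :
    s.esymm k = krawtchouk s.card s.sum k := by
  induction s using Multiset.induction_on generalizing k with
  | empty =>
    cases k <;>
      simp [Multiset.esymm, krawtchouk, krawtchouk_zero_zero_succ, Multiset.powersetCard_zero_right]
  | cons a s ih =>
    cases k with
    | zero => simp [Multiset.esymm, krawtchouk]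
    | succ k =>
      have hs' : ∀ x ∈ s, x ^ 2 = 1 := fun x hx => hs x (Multiset.mem_cons_of_mem hx)
      rw [Multiset.esymm_cons_succ, ih hs', ih hs', Multiset.card_cons, Multiset.sum_cons,
        Nat.cast_succ, add_comm a, krawtchouk_succ_add (hs a (Multiset.mem_cons_self a s))]

section Cube

variable {ι : Type*}

def spin (x : ι → ZMod 2) (i : ι) : ℝ := if x i = 0 then 1 else -1

lemma spin_mul_spin_sq (x y : ι → ZMod 2) (i : ι) : (spin x i * spin y i) ^ 2 = 1 := by
  unfold spin; split_ifs <;> norm_num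

variable [Fintype ι]

lemma sum_spin_mul_spin [DecidableEq ι] (x y : ι → ZMod 2) :
    ∑ i, spin x i * spin y i = Fintype.card ι - 2 * hammingDist x y := by
  have h : ∀ i, spin x i * spin y i = 1 - 2 * if x i ≠ y i then 1 else 0 := by
    intro i
    unfold spin
    have hZ : ∀ a : ZMod 2, a = 0 ∨ a = 1 := by decide
    rcases hZ (x i) with ha | ha <;> rcases hZ (y i) with hb | hb <;> simp [ha, hb] <;> norm_num
  simp only [h, sum_sub_distrib, ← mul_sum, hammingDist, sum_boole]
  simp

lemma sum_sum_esymm_mul_nonneg {α : Type*} (u : α → ι → ℝ) (C : Finset α) (k : ℕ) :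
    0 ≤ ∑ x ∈ C, ∑ y ∈ C, (univ.val.map fun i => u x i * u y i).esymm k := by
  have h : ∑ x ∈ C, ∑ y ∈ C, (univ.val.map fun i => u x i * u y i).esymm k
      = ∑ S ∈ (univ : Finset ι).powersetCard k, (∑ x ∈ C, ∏ i ∈ S, u x i) ^ 2 := by
    simp_rw [esymm_map_val, prod_mul_distrib, sq, Finset.sum_mul_sum]
    exact sum_comm_cycle
  rw [h]
  positivity

lemma sum_sum_krawtchouk_nonneg [DecidableEq ι] (C : Finset (ι → ZMod 2)) (k : ℕ) :
    0 ≤ ∑ x ∈ C, ∑ y ∈ C,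
      krawtchouk (Fintype.card ι) (Fintype.card ι - 2 * hammingDist x y) k := by
  convert sum_sum_esymm_mul_nonneg spin C k using 3 with x _ y _
  rw [Multiset.esymm_eq_krawtchouk, ← sum_spin_mul_spin]
  · rw [Multiset.card_map, card_val, card_univ]
    rfl
  · simpa using fun i => spin_mul_spin_sq x y i

end Cube

theorem delsarte_bound {ι : Type*} [Fintype ι] [DecidableEq ι] (C : Finset (ι → ZMod 2))
    (hC : C.Nonempty) (f : ℝ → ℝ) (a : ℕ → ℝ) (D : ℕ)
    (hfa : ∀ s, f s = ∑ k ∈ range (D + 1), a k * krawtchouk (Fintype.card ι) s k)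
    (ha : ∀ k ∈ Icc 1 D, 0 ≤ a k)
    (hf : ∀ x ∈ C, ∀ y ∈ C, x ≠ y → f (Fintype.card ι - 2 * hammingDist x y) ≤ 0) :
    a 0 * #C ≤ f (Fintype.card ι) := by
  set F : ℝ := ∑ x ∈ C, ∑ y ∈ C, f (Fintype.card ι - 2 * hammingDist x y)
  have hupper : F ≤ #C * f (Fintype.card ι) := by
    rw [← nsmul_eq_mul, ← sum_const]
    refine sum_le_sum fun x hx => ?_
    rw [← add_sum_erase C _ hx, hammingDist_self, Nat.cast_zero, mul_zero, sub_zero,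
      add_le_iff_nonpos_right]
    exact sum_nonpos fun y hy => hf x hx y (mem_of_mem_erase hy) (ne_of_mem_erase hy).symm
  have hlower : a 0 * #C ^ 2 ≤ F := by
    have hF : F = ∑ k ∈ range (D + 1), a k * ∑ x ∈ C, ∑ y ∈ C,
        krawtchouk (Fintype.card ι) (Fintype.card ι - 2 * hammingDist x y) k := by
      simp only [F, hfa, mul_sum]
      exact sum_comm_cycle
    have hK₀ : ∑ x ∈ C, ∑ y ∈ C,
        krawtchouk (Fintype.card ι) (Fintype.card ι - 2 * hammingDist x y) 0 = #C ^ 2 := by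
      simp [krawtchouk, sq]
    rw [hF, sum_range_succ', hK₀]
    refine le_add_of_nonneg_left (sum_nonneg fun k hk => ?_)
    refine mul_nonneg (ha _ ?_) (sum_sum_krawtchouk_nonneg C _)
    simp only [mem_range, mem_Icc] at hk ⊢
    omega
  have hcard : (0 : ℝ) < #C := by exact_mod_cast hC.card_pos
  nlinarith

def testPoly (τ δ v s : ℝ) : ℝ :=
  (s - 2 * τ * v) * ((2 - δ) * s ^ 2 + 4 * τ * v * s + δ * v ^ 2) ^ 2

def testCoeff (τ δ v : ℝ) : ℕ → ℝ
  | 0 => 4 * τ * (2 - δ) * (δ * v ^ 2 - 2 - δ) * v ^ 3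
  | 1 => (2 * δ ^ 2 - 12 * δ + 24) * v ^ 4 - (18 * δ ^ 2 - 80 * δ + 96) * v ^ 2 + 16 * (2 - δ) ^ 2
  | 2 => 4 * τ * (-4 * δ ^ 2 + 4 * δ + 12) * v ^ 3 - 32 * τ * (4 - δ ^ 2) * v
  | 3 => (24 * δ ^ 2 - 120 * δ + 168) * v ^ 2 - 120 * (2 - δ) ^ 2
  | 4 => 48 * τ * (4 - δ ^ 2) * v
  | 5 => 120 * (2 - δ) ^ 2
  | _ => 0

lemma testPoly_eq_sum_krawtchouk (τ v s : ℝ) :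
    testPoly τ (3 - 4 * τ ^ 2) v s
      = ∑ k ∈ range 6, testCoeff τ (3 - 4 * τ ^ 2) v k * krawtchouk (v ^ 2) s k := by
  simp only [sum_range_succ, sum_range_zero, testPoly, testCoeff, krawtchouk]
  push_cast
  ring

lemma testPoly_nonpos {τ δ v s : ℝ} (hs : s ≤ 2 * τ * v) : testPoly τ δ v s ≤ 0 :=
  mul_nonpos_of_nonpos_of_nonneg (sub_nonpos.2 hs) (sq_nonneg _)

lemma testPoly_sq_le {τ δ v : ℝ} (hτ₀ : 0 ≤ τ) (hτ₁ : τ ≤ 1) (hδ₀ : 0 ≤ δ) (hδ₂ : δ ≤ 2)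
    (hv : 4 ≤ v) : testPoly τ δ v (v ^ 2) ≤ 16 * v ^ 10 := by
  have hQ₀ : 0 ≤ (2 - δ) * (v ^ 2) ^ 2 + 4 * τ * v * v ^ 2 + δ * v ^ 2 := by positivity
  have hQ : (2 - δ) * (v ^ 2) ^ 2 + 4 * τ * v * v ^ 2 + δ * v ^ 2 ≤ 4 * v ^ 4 := by
    have h₁ : 4 * τ * v * v ^ 2 ≤ v ^ 4 := by
      calc 4 * τ * v * v ^ 2 ≤ 4 * 1 * v * v ^ 2 := by gcongr
        _ ≤ v * v * v ^ 2 := by gcongr; linarith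
        _ = v ^ 4 := by ring
    have h₂ : δ * v ^ 2 ≤ v ^ 4 := by
      calc δ * v ^ 2 ≤ v ^ 2 * v ^ 2 := by gcongr; nlinarith
        _ = v ^ 4 := by ring
    nlinarith
  calc testPoly τ δ v (v ^ 2) ≤ v ^ 2 * (4 * v ^ 4) ^ 2 := by
        unfold testPoly
        gcongr
        nlinarith
    _ = 16 * v ^ 10 := by ring

lemma testCoeff_nonneg {τ δ v : ℝ} (hτ : 0 ≤ τ) (hδ₀ : 0 ≤ δ) (hδ₂ : δ ≤ 2) (hv : 5 ≤ v)
    {k : ℕ} (hk : 1 ≤ k) : 0 ≤ testCoeff τ δ v k := by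
  match k, hk with
  | 1, _ =>
    have h₁ : 8 ≤ 2 * δ ^ 2 - 12 * δ + 24 := by nlinarith
    have h₂ : 18 * δ ^ 2 - 80 * δ + 96 ≤ 96 := by nlinarith
    have hv₂ : 96 * v ^ 2 ≤ 8 * v ^ 4 := by
      nlinarith [mul_nonneg (sq_nonneg v) (by nlinarith : (0 : ℝ) ≤ v ^ 2 - 12)]
    have := mul_le_mul_of_nonneg_right h₁ (by positivity : (0 : ℝ) ≤ v ^ 4)
    have := mul_le_mul_of_nonneg_right h₂ (by positivity : (0 : ℝ) ≤ v ^ 2)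
    simp only [testCoeff]
    nlinarith [sq_nonneg (2 - δ)]
  | 2, _ =>
    have h₁ : 4 ≤ -4 * δ ^ 2 + 4 * δ + 12 := by nlinarith
    have h₂ : 4 - δ ^ 2 ≤ 4 := by nlinarith
    have hv₂ : 32 * v ≤ 4 * v ^ 3 := by
      nlinarith [mul_nonneg (by linarith : (0 : ℝ) ≤ v) (by nlinarith : (0 : ℝ) ≤ v ^ 2 - 8)]
    have := mul_le_mul_of_nonneg_right h₁ (by positivity : (0 : ℝ) ≤ v ^ 3)
    have := mul_le_mul_of_nonneg_right h₂ (by positivity : (0 : ℝ) ≤ v)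
    simp only [testCoeff]
    nlinarith
  | 3, _ =>
    have h₁ : 24 ≤ 24 * δ ^ 2 - 120 * δ + 168 := by nlinarith
    have h₂ : (2 - δ) ^ 2 ≤ 4 := by nlinarith
    have := mul_le_mul_of_nonneg_right h₁ (by positivity : (0 : ℝ) ≤ v ^ 2)
    simp only [testCoeff]
    nlinarith
  | 4, _ =>
    have : 0 ≤ 4 - δ ^ 2 := by nlinarith
    simp only [testCoeff]
    have : 0 ≤ v := by linarith
    positivity
  | 5, _ => simp only [testCoeff]; positivity
  | _ + 6, _ => simp [testCoeff]

lemma testCoeff_zero_ge {τ δ v : ℝ} (hτδ : 1 ≤ 4 * τ * (2 - δ)) (hδ₂ : δ ≤ 2)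
    (hv : 0 ≤ v) (hδv : 8 ≤ δ * v ^ 2) : δ / 2 * v ^ 5 ≤ testCoeff τ δ v 0 := by
  have h : δ * v ^ 2 / 2 ≤ δ * v ^ 2 - 2 - δ := by linarith
  calc δ / 2 * v ^ 5 = 1 * (δ * v ^ 2 / 2) * v ^ 3 := by ring
    _ ≤ 4 * τ * (2 - δ) * (δ * v ^ 2 - 2 - δ) * v ^ 3 := by gcongr

theorem card_le_of_hammingDist_ge {ι : Type*} [Fintype ι] [DecidableEq ι] {τ : ℝ}
    (hτ₁ : 3 / 5 ≤ τ) (hτ₂ : 4 * τ ^ 2 < 3) (hn : 25 ≤ Fintype.card ι)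
    (hδn : 8 ≤ (3 - 4 * τ ^ 2) * Fintype.card ι) (C : Finset (ι → ZMod 2))
    (hC : ∀ x ∈ C, ∀ y ∈ C, x ≠ y →
      (Fintype.card ι : ℝ) / 2 - τ * √(Fintype.card ι) ≤ hammingDist x y) :
    (3 - 4 * τ ^ 2) * #C ≤ 32 * √(Fintype.card ι) ^ 5 := by
  set δ := 3 - 4 * τ ^ 2
  set v := √(Fintype.card ι)
  have hv₂ : v ^ 2 = Fintype.card ι := Real.sq_sqrt (Nat.cast_nonneg _)
  have hv : 5 ≤ v := by
    rw [show (5 : ℝ) = √25 by rw [show (25 : ℝ) = 5 ^ 2 by norm_num, Real.sqrt_sq (by norm_num)]]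
    exact Real.sqrt_le_sqrt (by exact_mod_cast hn)
  rcases C.eq_empty_or_nonempty with rfl | hCne
  · simp only [card_empty, Nat.cast_zero, mul_zero]
    positivity
  have hδ₀ : 0 < δ := by linarith
  have hδ₂ : δ ≤ 2 := by nlinarith
  have hτδ : 1 ≤ 4 * τ * (2 - δ) := by nlinarith
  have hbound := delsarte_bound C hCne (testPoly τ δ v) (testCoeff τ δ v) 5
    (fun s => hv₂ ▸ testPoly_eq_sum_krawtchouk τ v s)
    (fun k hk => testCoeff_nonneg (by linarith) hδ₀.le hδ₂ hv (mem_Icc.1 hk).1)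
    (fun x hx y hy hxy => testPoly_nonpos (by linarith [hC x hx y hy hxy]))
  have ha₀ := testCoeff_zero_ge hτδ hδ₂ (by linarith) (hv₂ ▸ hδn)
  have hf := testPoly_sq_le (τ := τ) (v := v) (by linarith) (by nlinarith) hδ₀.le hδ₂
    (by linarith)
  rw [hv₂] at hf
  have hv₅ : 0 < v ^ 5 := by positivity
  have hC₀ : (0 : ℝ) ≤ #C := by positivity
  nlinarith [mul_le_mul_of_nonneg_right ha₀ hC₀]

theorem upper_bound_t_sqrt_n_small_general (t : ℝ) (ht : t < Real.sqrt 3 / 2) :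
    ∃ K : ℝ, 0 < K ∧ ∃ N : ℕ, ∀ n : ℕ, N ≤ n →
      ∀ d : ℕ, ∀ C : Finset (Fin n → ZMod 2),
        (∀ x ∈ C, ∀ y ∈ C, x ≠ y → d ≤ hammingDist x y) →
        ((n : ℝ) / 2 - t * Real.sqrt n ≤ d) →
        (C.card : ℝ) ≤ K * (n : ℝ) ^ ((5 : ℝ) / 2) := by
  -- Raising `t` weakens the hypothesis on `d`; `τ ≥ 3/5` makes the constant coefficient large.
  set τ := max t (3 / 5)
  have hτ₁ : 3 / 5 ≤ τ := le_max_right _ _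
  have hτ₂ : 4 * τ ^ 2 < 3 := by
    have h3 := Real.sq_sqrt (show (0 : ℝ) ≤ 3 by norm_num)
    have hτ : τ < √3 / 2 := max_lt ht (by nlinarith [Real.sqrt_nonneg 3])
    nlinarith
  set δ := 3 - 4 * τ ^ 2
  have hδ : 0 < δ := by linarith
  refine ⟨32 / δ, by positivity, max 25 ⌈8 / δ⌉₊, fun n hn d C hC hd => ?_⟩
  have hn₁ : 25 ≤ Fintype.card (Fin n) := by simpa using le_of_max_le_left hn
  have hδn : 8 ≤ δ * Fintype.card (Fin n) := by
    rw [Fintype.card_fin, ← div_le_iff₀' hδ]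
    exact (Nat.le_ceil _).trans (by exact_mod_cast le_of_max_le_right hn)
  have hcard := card_le_of_hammingDist_ge hτ₁ hτ₂ hn₁ hδn C fun x hx y hy hxy => by
    have hτt : t * √n ≤ τ * √n := by gcongr; exact le_max_left _ _
    simp only [Fintype.card_fin]
    linarith [(Nat.cast_le (α := ℝ)).2 (hC x hx y hy hxy)]
  rw [Fintype.card_fin] at hcard
  rw [Real.rpow_div_two_eq_sqrt _ n.cast_nonneg, show (5 : ℝ) = (5 : ℕ) by norm_num,
    Real.rpow_natCast, div_mul_eq_mul_div, le_div_iff₀' hδ]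
  linarith

/-- For any fixed `0 < t < √3/2`, codes with minimum distance `d ≥ n/2 - t√n`
have size `O(n^{5/2})`. -/
theorem upper_bound_t_sqrt_n_small (t : ℝ) (ht0 : 0 < t) (ht : t < Real.sqrt 3 / 2) :
    ∃ K : ℝ, 0 < K ∧ ∃ N : ℕ, ∀ n : ℕ, N ≤ n →
      ∀ d : ℕ, ∀ C : Finset (Fin n → ZMod 2),
        (∀ x ∈ C, ∀ y ∈ C, x ≠ y → d ≤ hammingDist x y) →
        ((n : ℝ) / 2 - t * Real.sqrt n ≤ d) →
        (C.card : ℝ) ≤ K * (n : ℝ) ^ ((5 : ℝ) / 2) :=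
  upper_bound_t_sqrt_n_small_general t ht
end

section
/- If C ⊆ F_2^n is a binary (n, M, d) code with minimum distance d satisfying 0 < d < n/2, then M ≤ d · 2^{n − 2d + 2}. -/
lemma double_sum_le {m : ℕ} (D : Finset (Fin m → ZMod 2)) :
    2 * ∑ x ∈ D, ∑ y ∈ D, hammingDist x y ≤ m * D.card ^ 2 := by
  have hdist : ∀ x y : Fin m → ZMod 2, hammingDist x y = ∑ i, if x i = y i then 0 else 1 := by
    intro x y
    unfold hammingDist
    rw [Finset.card_filter]
    simp [ite_not]
  have hswap : ∑ x ∈ D, ∑ y ∈ D, hammingDist x y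
      = ∑ i : Fin m, ∑ x ∈ D, ∑ y ∈ D, (if x i = y i then 0 else 1) := by
    simp_rw [hdist]
    calc ∑ x ∈ D, ∑ y ∈ D, ∑ i : Fin m, (if x i = y i then 0 else 1)
        = ∑ x ∈ D, ∑ i : Fin m, ∑ y ∈ D, (if x i = y i then 0 else 1) :=
          Finset.sum_congr rfl fun x _ => Finset.sum_comm
      _ = ∑ i : Fin m, ∑ x ∈ D, ∑ y ∈ D, (if x i = y i then 0 else 1) := Finset.sum_comm
  rw [hswap, Finset.mul_sum]
  have hcard : ∀ i : Fin m,
      2 * (∑ x ∈ D, ∑ y ∈ D, (if x i = y i then 0 else 1)) ≤ D.card ^ 2 := by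
    intro i
    set a := (D.filter fun x => x i = 0).card with ha
    set b := (D.filter fun x => ¬ x i = 0).card with hb
    have hab : a + b = D.card := Finset.card_filter_add_card_filter_not _
    have hinner : ∀ x ∈ D, (∑ y ∈ D, (if x i = y i then 0 else 1))
        = if x i = 0 then b else a := by
      intro x hx
      have : (∑ y ∈ D, (if x i = y i then 0 else 1))
          = (D.filter fun y => ¬ x i = y i).card := by
        rw [Finset.card_filter]
        refine Finset.sum_congr rfl fun y _ => ?_
        by_cases h : x i = y i <;> simp [h]
      rw [this]
      by_cases hx0 : x i = 0
      · rw [if_pos hx0, hb]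
        congr 1
        ext y
        simp [hx0, eq_comm]
      · rw [if_neg hx0, ha]
        congr 1
        ext y
        have : ∀ u v : ZMod 2, ¬ u = 0 → (¬ u = v ↔ v = 0) := by decide
        simp [this _ _ hx0]
    have houter : (∑ x ∈ D, ∑ y ∈ D, (if x i = y i then 0 else 1))
        = a * b + b * a := by
      rw [Finset.sum_congr rfl hinner, Finset.sum_ite, Finset.sum_const, Finset.sum_const]
      simp [ha, hb, mul_comm]
    rw [houter]
    nlinarith [sq_nonneg (a - b : ℤ), hab]
  calc ∑ i : Fin m, 2 * (∑ x ∈ D, ∑ y ∈ D, (if x i = y i then 0 else 1))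
      ≤ ∑ i : Fin m, D.card ^ 2 := Finset.sum_le_sum fun i _ => hcard i
    _ = m * D.card ^ 2 := by simp [Finset.sum_const, mul_comm]
lemma plotkin_base {d : ℕ} (hd0 : 0 < d) (D : Finset (Fin (2 * d - 1) → ZMod 2))
    (hD : ∀ x ∈ D, ∀ y ∈ D, x ≠ y → d ≤ hammingDist x y) :
    D.card ≤ 2 * d := by
  set M := D.card with hM
  have hlow : d * (M * (M - 1)) ≤ ∑ x ∈ D, ∑ y ∈ D, hammingDist x y := by
    have : ∀ x ∈ D, d * (M - 1) ≤ ∑ y ∈ D, hammingDist x y := by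
      intro x hx
      have h1 : ∑ y ∈ D, hammingDist x y = ∑ y ∈ D.erase x, hammingDist x y := by
        rw [← Finset.add_sum_erase D _ hx, hammingDist_self, zero_add]
      rw [h1]
      calc d * (M - 1) = ∑ _y ∈ D.erase x, d := by
            rw [Finset.sum_const, Finset.card_erase_of_mem hx, smul_eq_mul, mul_comm]
        _ ≤ ∑ y ∈ D.erase x, hammingDist x y := by
            refine Finset.sum_le_sum fun y hy => ?_
            exact hD x hx y (Finset.mem_of_mem_erase hy) (Finset.ne_of_mem_erase hy).symm
    calc d * (M * (M - 1)) = ∑ _x ∈ D, d * (M - 1) := by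
          rw [Finset.sum_const, smul_eq_mul]; ring
      _ ≤ _ := Finset.sum_le_sum this
  have hup := double_sum_le D
  have key : 2 * (d * (M * (M - 1))) ≤ (2 * d - 1) * M ^ 2 := by
    calc 2 * (d * (M * (M - 1))) ≤ 2 * ∑ x ∈ D, ∑ y ∈ D, hammingDist x y := by omega
      _ ≤ (2 * d - 1) * M ^ 2 := hup
  by_cases hM0 : M = 0
  · omega
  · obtain ⟨m1, hm1⟩ := Nat.exists_eq_succ_of_ne_zero hM0
    obtain ⟨d1, hd1⟩ := Nat.exists_eq_succ_of_ne_zero (Nat.pos_iff_ne_zero.mp hd0)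
    rw [hm1, hd1] at key ⊢
    have h2 : 2 * d1.succ - 1 = 2 * d1 + 1 := by omega
    rw [h2] at key
    simp only [Nat.succ_eq_add_one, Nat.add_sub_cancel] at key ⊢
    nlinarith

/-- Plotkin-type corollary: if a binary `(n, M, d)` code has `0 < d < n/2`,
then `M ≤ d · 2^(n - 2d + 2)`. -/
theorem plotkin_corollary {n : ℕ} (d : ℕ) (C : Finset (Fin n → ZMod 2))
    (hd0 : 0 < d) (hd : 2 * d < n)
    (hC : ∀ x ∈ C, ∀ y ∈ C, x ≠ y → d ≤ hammingDist x y) :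
    C.card ≤ d * 2 ^ (n - 2 * d + 2) := by
  set m := 2 * d - 1 with hm
  set k := n - m with hk
  have hn : n = k + m := by omega
  let e : Fin n ≃ Fin (k + m) := finCongr hn
  let g : (Fin n → ZMod 2) → (Fin k → ZMod 2) := fun x i => x (e.symm (Fin.castAdd m i))
  let h : (Fin n → ZMod 2) → (Fin m → ZMod 2) := fun x j => x (e.symm (Fin.natAdd k j))
  -- distance splits
  have hsplit : ∀ x y : Fin n → ZMod 2,
      hammingDist x y = hammingDist (g x) (g y) + hammingDist (h x) (h y) := by
    intro x y
    have hre : hammingDist x y = hammingDist (x ∘ e.symm) (y ∘ e.symm) := by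
      unfold hammingDist
      refine Finset.card_bij' (fun i _ => e i) (fun j _ => e.symm j) ?_ ?_ ?_ ?_
      · intro i hi
        simp only [Finset.mem_filter, Finset.mem_univ, true_and] at hi ⊢
        simpa using hi
      · intro j hj
        simp only [Finset.mem_filter, Finset.mem_univ, true_and] at hj ⊢
        simpa using hj
      · intro i _; simp
      · intro j _; simp
    rw [hre]
    have hdist : ∀ {p : ℕ} (u v : Fin p → ZMod 2),
        hammingDist u v = ∑ i, if u i = v i then 0 else 1 := by
      intro p u v
      unfold hammingDist
      rw [Finset.card_filter]
      simp [ite_not]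
    rw [hdist, hdist, hdist, Fin.sum_univ_add]
    rfl
  -- injectivity of (g, h)
  have hinj : ∀ x y : Fin n → ZMod 2, g x = g y → h x = h y → x = y := by
    intro x y hg hh
    have hall : ∀ j : Fin (k + m), x (e.symm j) = y (e.symm j) := by
      intro j
      refine Fin.addCases (motive := fun j => x (e.symm j) = y (e.symm j))
        (fun p => congrFun hg p) (fun p => congrFun hh p) j
    funext i
    have := hall (e i)
    simpa using this
  -- fiberwise count
  have hfib := Finset.card_eq_sum_card_fiberwise
    (fun x (hx : x ∈ C) => Finset.mem_image_of_mem g hx)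
  rw [hfib]
  have hbound : ∀ v ∈ C.image g, (C.filter fun x => g x = v).card ≤ 2 * d := by
    intro v hv
    set F := C.filter fun x => g x = v with hF
    have hhi : Set.InjOn h F := by
      intro x hx y hy hxy
      simp only [hF, Finset.coe_filter, Set.mem_setOf_eq] at hx hy
      exact hinj x y (hx.2.trans hy.2.symm) hxy
    have hcard : (F.image h).card = F.card := Finset.card_image_of_injOn hhi
    have hD : ∀ a ∈ F.image h, ∀ b ∈ F.image h, a ≠ b → d ≤ hammingDist a b := by
      intro a ha b hb hab
      obtain ⟨x, hx, rfl⟩ := Finset.mem_image.mp ha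
      obtain ⟨y, hy, rfl⟩ := Finset.mem_image.mp hb
      simp only [hF, Finset.mem_filter] at hx hy
      have hxy : x ≠ y := fun hxy => hab (by rw [hxy])
      have := hC x hx.1 y hy.1 hxy
      rw [hsplit x y, hx.2.trans hy.2.symm, hammingDist_self, zero_add] at this
      exact this
    have := plotkin_base hd0 (F.image h) hD
    omega
  calc ∑ v ∈ C.image g, (C.filter fun x => g x = v).card
      ≤ ∑ v ∈ C.image g, 2 * d := Finset.sum_le_sum hbound
    _ = (C.image g).card * (2 * d) := by rw [Finset.sum_const, smul_eq_mul]
    _ ≤ 2 ^ k * (2 * d) := by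
        have h1 : (C.image g).card ≤ Fintype.card (Fin k → ZMod 2) :=
          Finset.card_le_univ _
        have h2 : Fintype.card (Fin k → ZMod 2) = 2 ^ k := by simp
        exact Nat.mul_le_mul_right _ (h2 ▸ h1)
    _ = d * 2 ^ (n - 2 * d + 2) := by
        have h2 : n - 2 * d + 2 = k + 1 := by omega
        rw [h2, pow_succ]
        ring
end

section
/- Let a > 0 be a real constant. If C ⊆ F_2^n is a binary (n, M, d) code with minimum distance d satisfying n/2 − a√n ≤ d < n/2, then M ≤ 2n · 2^{2a√n}. -/
open Finset

lemma sign_mul_eq (a b : ZMod 2) :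
    (if a = 0 then (1:ℤ) else -1) * (if b = 0 then 1 else -1)
      = 1 - 2 * (if a ≠ b then 1 else 0) := by
  revert a b; decide

lemma hamming_eq_sum {ι : Type*} [Fintype ι] [DecidableEq ι] (x y : ι → ZMod 2) :
    (hammingDist x y : ℤ) = ∑ i : ι, (if x i ≠ y i then (1:ℤ) else 0) := by
  rw [hammingDist, card_filter]
  push_cast
  rfl

lemma plotkin_lemma {ι : Type*} [Fintype ι] [DecidableEq ι] (d : ℕ)
    (hm : Fintype.card ι < 2 * d)
    (C : Finset (ι → ZMod 2))
    (hC : ∀ x ∈ C, ∀ y ∈ C, x ≠ y → d ≤ hammingDist x y) :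
    C.card ≤ 2 * d := by
  set M : ℤ := (C.card : ℤ) with hM
  have key : ∀ i : ι, 2 * (∑ x ∈ C, ∑ y ∈ C, (if x i ≠ y i then (1:ℤ) else 0)) ≤ M ^ 2 := by
    intro i
    have h1 : (∑ x ∈ C, (if x i = 0 then (1:ℤ) else -1)) ^ 2
        = ∑ x ∈ C, ∑ y ∈ C, (1 - 2 * (if x i ≠ y i then (1:ℤ) else 0)) := by
      rw [sq, Finset.sum_mul_sum]
      exact Finset.sum_congr rfl fun x _ => Finset.sum_congr rfl fun y _ => sign_mul_eq _ _
    have h2 : ∑ x ∈ C, ∑ y ∈ C, (1 - 2 * (if x i ≠ y i then (1:ℤ) else 0))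
        = M ^ 2 - 2 * ∑ x ∈ C, ∑ y ∈ C, (if x i ≠ y i then (1:ℤ) else 0) := by
      simp only [Finset.sum_sub_distrib, Finset.sum_const, nsmul_eq_mul, mul_one,
        ← Finset.mul_sum]
      rw [hM]; ring
    nlinarith [sq_nonneg (∑ x ∈ C, (if x i = 0 then (1:ℤ) else -1))]
  have hup : 2 * (∑ x ∈ C, ∑ y ∈ C, (hammingDist x y : ℤ))
      ≤ (Fintype.card ι : ℤ) * M ^ 2 := by
    have hswap : ∑ x ∈ C, ∑ y ∈ C, (hammingDist x y : ℤ)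
        = ∑ i : ι, ∑ x ∈ C, ∑ y ∈ C, (if x i ≠ y i then (1:ℤ) else 0) :=
      calc ∑ x ∈ C, ∑ y ∈ C, (hammingDist x y : ℤ)
          = ∑ x ∈ C, ∑ y ∈ C, ∑ i : ι, (if x i ≠ y i then (1:ℤ) else 0) :=
            Finset.sum_congr rfl fun x _ => Finset.sum_congr rfl fun y _ => hamming_eq_sum x y
        _ = ∑ x ∈ C, ∑ i : ι, ∑ y ∈ C, (if x i ≠ y i then (1:ℤ) else 0) :=
            Finset.sum_congr rfl fun x _ => Finset.sum_comm
        _ = ∑ i : ι, ∑ x ∈ C, ∑ y ∈ C, (if x i ≠ y i then (1:ℤ) else 0) := Finset.sum_comm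
    rw [hswap, Finset.mul_sum]
    calc ∑ i : ι, 2 * (∑ x ∈ C, ∑ y ∈ C, (if x i ≠ y i then (1:ℤ) else 0))
        ≤ ∑ _i : ι, M ^ 2 := Finset.sum_le_sum fun i _ => key i
      _ = (Fintype.card ι : ℤ) * M ^ 2 := by simp [Finset.card_univ]
  have hlow : M * (M - 1) * d ≤ ∑ x ∈ C, ∑ y ∈ C, (hammingDist x y : ℤ) := by
    have hx : ∀ x ∈ C, (M - 1) * d ≤ ∑ y ∈ C, (hammingDist x y : ℤ) := by
      intro x hx
      have h1 : ∑ y ∈ C, (if y = x then (0:ℤ) else d) ≤ ∑ y ∈ C, (hammingDist x y : ℤ) := by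
        refine Finset.sum_le_sum fun y hy => ?_
        by_cases h : y = x
        · simp [h]
        · simpa [h] using (Nat.cast_le.2 (hC x hx y hy (Ne.symm h)) :
            (d:ℤ) ≤ (hammingDist x y : ℤ))
      have hpos : 1 ≤ C.card := Finset.card_pos.2 ⟨x, hx⟩
      have h2 : ∑ y ∈ C, (if y = x then (0:ℤ) else d) = (M - 1) * d := by
        rw [← Finset.sum_erase_add _ _ hx]
        have he : ∑ y ∈ C.erase x, (if y = x then (0:ℤ) else d)
            = ∑ _y ∈ C.erase x, (d:ℤ) := by
          refine Finset.sum_congr rfl fun y hy => ?_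
          simp [Finset.ne_of_mem_erase hy]
        rw [he, Finset.sum_const, Finset.card_erase_of_mem hx, if_pos rfl, add_zero,
          nsmul_eq_mul, hM]
        push_cast [hpos]
        ring
      linarith
    calc M * (M - 1) * d = ∑ _x ∈ C, (M - 1) * (d:ℤ) := by
          rw [Finset.sum_const, nsmul_eq_mul, hM]; ring
      _ ≤ _ := Finset.sum_le_sum hx
  have hMnn : (0:ℤ) ≤ M := by simp [hM]
  have hcard : (Fintype.card ι : ℤ) ≤ 2 * (d:ℤ) - 1 := by
    have : (Fintype.card ι : ℤ) < 2 * (d:ℤ) := by exact_mod_cast hm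
    omega
  have hfin : M ≤ 2 * (d:ℤ) := by
    rcases eq_or_lt_of_le hMnn with h | h
    · rw [← h]; positivity
    · nlinarith
  rw [hM] at hfin
  exact_mod_cast hfin

open Finset

-- distance preservation under restriction
lemma dist_restrict {n : ℕ} (S : Finset (Fin n)) (x y : Fin n → ZMod 2)
    (h : ∀ i : Fin n, i ∉ S → x i = y i) :
    hammingDist (fun i : ↥S => x i) (fun i : ↥S => y i) = hammingDist x y := by
  rw [hammingDist, hammingDist]
  rw [Finset.card_filter, Finset.card_filter]
  rw [Finset.univ_eq_attach, Finset.sum_attach S (fun i => if x i ≠ y i then 1 else 0)]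
  rw [← Finset.sum_add_sum_compl S (fun i => if x i ≠ y i then 1 else 0)]
  have : ∑ i ∈ Sᶜ, (if x i ≠ y i then 1 else 0) = 0 := by
    refine Finset.sum_eq_zero fun i hi => ?_
    simp [h i (Finset.mem_compl.1 hi)]
  omega

-- shortening bound
lemma shorten_bound {n : ℕ} (d : ℕ) (hd : 1 ≤ d) (hn : 2 * d - 1 ≤ n)
    (C : Finset (Fin n → ZMod 2))
    (hC : ∀ x ∈ C, ∀ y ∈ C, x ≠ y → d ≤ hammingDist x y) :
    C.card ≤ 2 ^ (n - (2 * d - 1)) * (2 * d) := by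
  obtain ⟨S, -, hScard⟩ := Finset.exists_subset_card_eq
    (show 2 * d - 1 ≤ (Finset.univ : Finset (Fin n)).card by simpa using hn)
  -- restriction maps
  set rOut : (Fin n → ZMod 2) → (↥(Sᶜ) → ZMod 2) := fun x i => x i with hrOut
  have hfib : ∀ b : ↥(Sᶜ) → ZMod 2, (C.filter fun x => rOut x = b).card ≤ 2 * d := by
    intro b
    set F := C.filter fun x => rOut x = b with hF
    have hagree : ∀ x ∈ F, ∀ y ∈ F, ∀ i : Fin n, i ∉ S → x i = y i := by
      intro x hx y hy i hi
      have hxb : rOut x = b := (Finset.mem_filter.1 hx).2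
      have hyb : rOut y = b := (Finset.mem_filter.1 hy).2
      have := congrFun (hxb.trans hyb.symm) ⟨i, Finset.mem_compl.2 hi⟩
      exact this
    set rIn : (Fin n → ZMod 2) → (↥S → ZMod 2) := fun x i => x i with hrIn
    have hinj : Set.InjOn rIn F := by
      intro x hx y hy hxy
      funext i
      by_cases hi : i ∈ S
      · exact congrFun hxy ⟨i, hi⟩
      · exact hagree x hx y hy i hi
    have hcardim : F.card = (F.image rIn).card :=
      (Finset.card_image_of_injOn hinj).symm
    rw [hcardim]
    refine plotkin_lemma d ?_ (F.image rIn) ?_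
    · rw [Fintype.card_coe, hScard]; omega
    · intro u hu v hv huv
      obtain ⟨x, hx, rfl⟩ := Finset.mem_image.1 hu
      obtain ⟨y, hy, rfl⟩ := Finset.mem_image.1 hv
      have hxy : x ≠ y := fun h => huv (by rw [h])
      have hdle : d ≤ hammingDist x y :=
        hC x (Finset.mem_filter.1 hx).1 y (Finset.mem_filter.1 hy).1 hxy
      have := dist_restrict S x y (hagree x hx y hy)
      show d ≤ hammingDist (fun i : ↥S => x i) (fun i : ↥S => y i)
      omega
  -- fiberwise count
  have hcount : C.card = ∑ b : ↥(Sᶜ) → ZMod 2, (C.filter fun x => rOut x = b).card :=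
    Finset.card_eq_sum_card_fiberwise fun x _ => Finset.mem_univ _
  rw [hcount]
  calc ∑ b : ↥(Sᶜ) → ZMod 2, (C.filter fun x => rOut x = b).card
      ≤ ∑ _b : ↥(Sᶜ) → ZMod 2, 2 * d := Finset.sum_le_sum fun b _ => hfib b
    _ = Fintype.card (↥(Sᶜ) → ZMod 2) * (2 * d) := by
        rw [Finset.sum_const, Finset.card_univ, smul_eq_mul]
    _ = 2 ^ (n - (2 * d - 1)) * (2 * d) := by
        rw [Fintype.card_fun, Fintype.card_coe, Finset.card_compl, hScard]
        simp [ZMod.card]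
/-- If a binary `(n, M, d)` code has `n/2 - a√n ≤ d < n/2`, then `M ≤ 2n · 2^(2a√n)`. -/
theorem plotkin_sqrt_regime {n : ℕ} (a : ℝ) (ha : 0 < a) (d : ℕ)
    (C : Finset (Fin n → ZMod 2))
    (hd1 : (n : ℝ) / 2 - a * Real.sqrt n ≤ d) (hd2 : 2 * d < n)
    (hC : ∀ x ∈ C, ∀ y ∈ C, x ≠ y → d ≤ hammingDist x y) :
    (C.card : ℝ) ≤ 2 * n * (2 : ℝ) ^ (2 * a * Real.sqrt n) := by
  have hn : 1 ≤ n := by omega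
  have hnR : (1:ℝ) ≤ (n:ℝ) := by exact_mod_cast hn
  have hsq : Real.sqrt n * Real.sqrt n = n := Real.mul_self_sqrt (by positivity)
  have hrpos : (0:ℝ) < (2:ℝ) ^ (2 * a * Real.sqrt n) := Real.rpow_pos_of_pos (by norm_num) _
  rcases Nat.eq_zero_or_pos d with rfl | hd
  · -- degenerate case: n ≤ 2a√n
    have hspos : 0 < Real.sqrt n := Real.sqrt_pos.2 (by linarith)
    have h1 : (n:ℝ) ≤ 2 * a * Real.sqrt n := by
      have h2 : (n:ℝ) / 2 ≤ a * Real.sqrt n := by simpa using hd1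
      linarith
    have hcard : (C.card : ℝ) ≤ (2:ℝ) ^ (n:ℝ) := by
      have : C.card ≤ 2 ^ n := by
        calc C.card ≤ Fintype.card (Fin n → ZMod 2) := Finset.card_le_univ C
          _ = 2 ^ n := by simp [Fintype.card_fun, ZMod.card]
      calc (C.card : ℝ) ≤ ((2^n : ℕ) : ℝ) := by exact_mod_cast this
        _ = (2:ℝ) ^ (n:ℝ) := by rw [Real.rpow_natCast]; push_cast; ring
    have hmono : (2:ℝ) ^ (n:ℝ) ≤ (2:ℝ) ^ (2 * a * Real.sqrt n) :=
      Real.rpow_le_rpow_of_exponent_le (by norm_num) h1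
    calc (C.card : ℝ) ≤ (2:ℝ) ^ (2 * a * Real.sqrt n) := hcard.trans hmono
      _ ≤ 2 * n * (2:ℝ) ^ (2 * a * Real.sqrt n) := by nlinarith
  · -- main case
    have hnat : C.card ≤ 2 ^ (n - (2 * d - 1)) * (2 * d) :=
      shorten_bound d hd (by omega) C hC
    have hk : n - (2 * d - 1) = (n - 2 * d) + 1 := by omega
    have hstep1 : (C.card : ℝ) ≤ (2:ℝ) ^ ((n - 2 * d : ℕ) : ℝ) * 2 * (2 * d) := by
      have : (C.card : ℝ) ≤ ((2 ^ ((n - 2*d) + 1) * (2 * d) : ℕ) : ℝ) := by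
        exact_mod_cast hk ▸ hnat
      calc (C.card : ℝ) ≤ ((2 ^ ((n - 2*d) + 1) * (2 * d) : ℕ) : ℝ) := this
        _ = (2:ℝ) ^ ((n - 2 * d : ℕ) : ℝ) * 2 * (2 * d) := by
            push_cast
            rw [Real.rpow_natCast]
            ring
    have hexp : ((n - 2 * d : ℕ) : ℝ) ≤ 2 * a * Real.sqrt n := by
      have h1 : ((n - 2 * d : ℕ) : ℝ) = (n:ℝ) - 2 * d := by
        push_cast [Nat.cast_sub (le_of_lt hd2)]
        ring
      rw [h1]; linarith
    have hmono : (2:ℝ) ^ ((n - 2 * d : ℕ) : ℝ) ≤ (2:ℝ) ^ (2 * a * Real.sqrt n) :=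
      Real.rpow_le_rpow_of_exponent_le (by norm_num) hexp
    have hdn : (2:ℝ) * (2 * d) ≤ 2 * n := by
      have : (2 * d : ℝ) ≤ (n:ℝ) := by exact_mod_cast le_of_lt hd2
      linarith
    calc (C.card : ℝ) ≤ (2:ℝ) ^ ((n - 2 * d : ℕ) : ℝ) * 2 * (2 * d) := hstep1
      _ = (2:ℝ) ^ ((n - 2 * d : ℕ) : ℝ) * (2 * (2 * d)) := by ring
      _ ≤ (2:ℝ) ^ (2 * a * Real.sqrt n) * (2 * n) := by
          refine mul_le_mul hmono hdn (by positivity) (le_of_lt hrpos)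
      _ = 2 * n * (2:ℝ) ^ (2 * a * Real.sqrt n) := by ring
end
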